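/- arXiv:1503.04975 — 5 statements merged into one kernel-verified Lean document; each statement's English description precedes it below -/
import Mathlib

section
/- Let R be a ring in which every element is either a unit or a zero divisor. If (a, b) ∈ R² is non-unimodular and R(a, b) is a free cyclic submodule of R², then (a, b) is an outlier. -/
theorem IsUnit.exists_mul_mul_add_mul_mul_eq_one {R : Type*} [Ring R] {r x y u v : R}
    (hr : IsUnit r) (huv : x * u + y * v = 1) : ∃ u' v' : R, r * x * u' + r * y * v' = 1 := by
  obtain ⟨w, hw⟩ := hr.exists_right_inv
  refine ⟨u * w, v * w, ?_⟩
  calc r * x * (u * w) + r * y * (v * w) = r * (x * u + y * v) * w := by noncomm_ring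
    _ = 1 := by rw [huv, mul_one, hw]

theorem eq_zero_of_mul_eq_zero_of_free {R : Type*} [Ring R] {r x y c : R}
    (hfree : ∀ s : R, s * (r * x) = 0 → s * (r * y) = 0 → s = 0) (hc : c * r = 0) : c = 0 :=
  hfree c (by rw [← mul_assoc, hc, zero_mul]) (by rw [← mul_assoc, hc, zero_mul])

/-- In a ring where every element is a unit or has a nonzero left annihilator:
if `(a, b)` is non-unimodular and `R(a, b)` is free, then `(a, b)` is an outlier. -/
theorem stmt_10 {R : Type*} [Ring R]
    (hF : ∀ u : R, IsUnit u ∨ ∃ c : R, c ≠ 0 ∧ c * u = 0)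
    (a b : R)
    (hnu : ¬ ∃ u v : R, a * u + b * v = 1)
    (hfree : ∀ r : R, r * a = 0 → r * b = 0 → r = 0) :
    ¬ ∃ r x y : R, (∃ u v : R, x * u + y * v = 1) ∧ a = r * x ∧ b = r * y := by
  rintro ⟨r, x, y, ⟨u, v, huv⟩, rfl, rfl⟩
  rcases hF r with hr | ⟨c, hc, hcr⟩
  · exact hnu (hr.exists_mul_mul_add_mul_mul_eq_one huv)
  · exact hc (eq_zero_of_mul_eq_zero_of_free hfree hcr)
end

section
/- Let R₁, ..., Rₙ be rings and R = R₁ × ... × Rₙ. A pair ((a₁,...,aₙ), (b₁,...,bₙ)) ∈ R² is an outlier if and only if there exists some i with (aᵢ, bᵢ) ∈ Rᵢ² an outlier. -/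
/-!
Right unimodularity and the factorisation `(a, b) = r (x, y)` are both systems of
equations, and equations in a product of rings hold exactly when they hold in every
factor; the witnesses for the product are assembled componentwise by choice.
-/

section

variable {S : Type*} [Semiring S]

def IsRightUnimodular (x y : S) : Prop :=
  ∃ u v : S, x * u + y * v = 1

/-- `(a, b)` is not an outlier. -/
def IsUnimodularMultiple (a b : S) : Prop :=
  ∃ r x y : S, IsRightUnimodular x y ∧ a = r * x ∧ b = r * y

end

namespace Pi

variable {ι : Type*} {R : ι → Type*} [∀ i, Semiring (R i)]

theorem isRightUnimodular_iff {x y : ∀ i, R i} :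
    IsRightUnimodular x y ↔ ∀ i, IsRightUnimodular (x i) (y i) := by
  refine ⟨fun ⟨u, v, h⟩ i => ⟨u i, v i, congrFun h i⟩, fun h => ?_⟩
  choose u v huv using h
  exact ⟨u, v, funext huv⟩

theorem isUnimodularMultiple_iff {a b : ∀ i, R i} :
    IsUnimodularMultiple a b ↔ ∀ i, IsUnimodularMultiple (a i) (b i) := by
  constructor
  · rintro ⟨r, x, y, hxy, rfl, rfl⟩ i
    exact ⟨r i, x i, y i, isRightUnimodular_iff.mp hxy i, rfl, rfl⟩
  · intro h
    choose r x y hxy ha hb using h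
    exact ⟨r, x, y, isRightUnimodular_iff.mpr hxy, funext ha, funext hb⟩

end Pi

/-- In a direct product of rings, a pair is an outlier iff some component pair
is an outlier. -/
theorem stmt_14 {n : ℕ} (R : Fin n → Type*) [∀ i, Ring (R i)]
    (a b : ∀ i, R i) :
    (¬ ∃ r x y : ∀ i, R i,
        (∃ u v : ∀ i, R i, x * u + y * v = 1) ∧ a = r * x ∧ b = r * y) ↔
      ∃ i, ¬ ∃ r x y : R i,
        (∃ u v : R i, x * u + y * v = 1) ∧ a i = r * x ∧ b i = r * y := by
  rw [← not_forall, not_iff_not]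
  exact Pi.isUnimodularMultiple_iff
end

section
/- If R is a finite commutative ring and R(a, b) ⊆ R² is a free cyclic submodule, then (a, b) is unimodular: there exist x, y ∈ R with ax + by = 1. -/
/-!
By prime avoidance over its finitely many associated primes, an ideal of a Noetherian ring
with zero annihilator contains a non-zero-divisor, and in an Artinian ring a non-zero-divisor is
a unit. Freeness of `R(a, b)` says precisely that the ideal `(a, b)` has zero annihilator.
-/

theorem Ideal.eq_top_of_annihilator_eq_bot {R : Type*} [CommRing R] [IsArtinianRing R]
    {I : Ideal R} (h : I.annihilator = ⊥) : I = ⊤ := by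
  have : FaithfulSMul R I := Module.annihilator_eq_bot.mp h
  obtain ⟨c, hcI, hc⟩ := I.nonempty_inter_nonZeroDivisors_of_faithfulSMul
  exact I.eq_top_of_isUnit_mem hcI (IsArtinianRing.isUnit_of_mem_nonZeroDivisors hc)

/-- In a finite commutative ring, every free cyclic submodule `R(a, b) ⊆ R²` is
generated by a unimodular pair. -/
theorem stmt_16 {R : Type*} [CommRing R] [Finite R] (a b : R)
    (hfree : ∀ r : R, r * a = 0 → r * b = 0 → r = 0) :
    ∃ x y : R, a * x + b * y = 1 := by
  have hann : (Ideal.span {a, b}).annihilator = ⊥ := by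
    refine (Submodule.eq_bot_iff _).mpr fun r hr ↦ ?_
    rw [Submodule.mem_annihilator_span] at hr
    exact hfree r (hr ⟨a, by simp⟩) (hr ⟨b, by simp⟩)
  obtain ⟨x, y, hxy⟩ := Ideal.mem_span_pair.mp
    ((Ideal.eq_top_iff_one _).mp (Ideal.eq_top_of_annihilator_eq_bot hann))
  exact ⟨x, y, by rw [← hxy]; ring⟩
end

section
/- Let R be the ring of matrices of the form [[a,0,0],[b,a,0],[c,0,d]] with a, b, c, d ∈ GF(2), let A = [[1,0,0],[1,1,0],[1,0,0]] and I₀ = [[0,0,0],[1,0,0],[1,0,0]]. Then the left cyclic submodule R(I₀, A) of R² is free: if M ∈ R satisfies M·I₀ = 0 and M·A = 0, then M = 0. -/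
/-! The columns of `A` and `I₀` span `GF(2)³`: with `Aeⱼ`, `I₀eⱼ` the columns,
`e₀ = Ae₀ + I₀e₀`, `e₁ = Ae₁`, `e₂ = Ae₁ + I₀e₀`. So `A P + I₀ Q = 1` for suitable `P`, `Q`,
and any `M` killing `A` and `I₀` from the left satisfies `M = M (A P + I₀ Q) = 0`. -/

theorem eq_zero_of_mul_eq_zero_of_mul_add_mul_eq_one {S : Type*} [Semiring S]
    {a b p q m : S} (h : a * p + b * q = 1) (ha : m * a = 0) (hb : m * b = 0) : m = 0 :=
  calc m = m * (a * p + b * q) := by rw [h, mul_one]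
    _ = 0 := by rw [mul_add, ← mul_assoc, ← mul_assoc, ha, hb, zero_mul, zero_mul, add_zero]

/-- In the ring `R = {[[a,0,0],[b,a,0],[c,0,d]] : a,b,c,d ∈ GF(2)}`, the left cyclic
submodule generated by the pair `(I₀, A)` is free. -/
theorem stmt_17
    (A I₀ : Matrix (Fin 3) (Fin 3) (ZMod 2))
    (hA : A = !![1, 0, 0; 1, 1, 0; 1, 0, 0])
    (hI₀ : I₀ = !![0, 0, 0; 1, 0, 0; 1, 0, 0]) :
    ∀ M : Matrix (Fin 3) (Fin 3) (ZMod 2),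
      (M 0 1 = 0 ∧ M 0 2 = 0 ∧ M 1 1 = M 0 0 ∧ M 1 2 = 0 ∧ M 2 1 = 0) →
      M * I₀ = 0 → M * A = 0 → M = 0 := by
  rintro M - hMI hMA
  have hspan : A * !![1, 0, 0; 0, 1, 1; 0, 0, 0] + I₀ * !![1, 0, 1; 0, 0, 0; 0, 0, 0] = 1 := by
    subst hA hI₀
    decide
  exact eq_zero_of_mul_eq_zero_of_mul_add_mul_eq_one hspan hMA hMI
end

section
/- Let F be a field, T₃ the ring of lower triangular 3×3 matrices over F, X = [[1,0,0],[0,1,0],[0,0,0]] and Y = [[0,0,0],[0,0,0],[0,1,0]]. Then the pair (X, Y) ∈ T₃² is not right unimodular, yet the left cyclic submodule T₃(X, Y) is free: M·X = 0 and M·Y = 0 for M ∈ T₃ imply M = 0. -/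
/-!
The diagonal entries of lower triangular matrices are multiplicative, so for lower triangular
`P, Q` the `(2,2)` entry of `X * P + Y * Q` is `X₂₂ P₂₂ + Y₂₂ Q₂₂ = 0`, never `1`. Freeness, on the
other hand, only needs `(X, Y)` to be right unimodular in the full matrix ring, and there
`X * 1 + Y * Yᵀ = 1`.
-/

namespace Matrix

theorem mul_apply_self_of_lower_triangular {n R : Type*} [Fintype n] [LinearOrder n]
    [NonUnitalNonAssocSemiring R] {A B : Matrix n n R}
    (hA : ∀ i j, i < j → A i j = 0) (hB : ∀ i j, i < j → B i j = 0) (i : n) :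
    (A * B) i i = A i i * B i i := by
  rw [mul_apply]
  refine Finset.sum_eq_single i (fun k _ hki => ?_) (by simp)
  rcases lt_or_gt_of_ne hki with hlt | hgt
  · rw [hB k i hlt, mul_zero]
  · rw [hA i k hgt, zero_mul]

end Matrix

theorem eq_zero_of_mul_eq_zero_of_mul_add_mul_eq_one_s18 {R : Type*} [Semiring R] {X Y P Q M : R}
    (hXY : X * P + Y * Q = 1) (hMX : M * X = 0) (hMY : M * Y = 0) : M = 0 := by
  calc M = M * (X * P + Y * Q) := by rw [hXY, mul_one]
    _ = M * X * P + M * Y * Q := by rw [mul_add, mul_assoc, mul_assoc]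
    _ = 0 := by rw [hMX, hMY, zero_mul, zero_mul, add_zero]

/-- In the ring `T₃` of lower triangular `3×3` matrices over a field `F`, the pair
`(X, Y)` below is not right unimodular, but generates a free left cyclic submodule. -/
theorem stmt_18 (F : Type*) [Field F]
    (X Y : Matrix (Fin 3) (Fin 3) F)
    (hX : X = !![1, 0, 0; 0, 1, 0; 0, 0, 0])
    (hY : Y = !![0, 0, 0; 0, 0, 0; 0, 1, 0]) :
    (¬ ∃ P Q : Matrix (Fin 3) (Fin 3) F,
        (∀ i j, i < j → P i j = 0) ∧ (∀ i j, i < j → Q i j = 0) ∧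
        X * P + Y * Q = 1) ∧
    (∀ M : Matrix (Fin 3) (Fin 3) F, (∀ i j, i < j → M i j = 0) →
        M * X = 0 → M * Y = 0 → M = 0) := by
  constructor
  · rintro ⟨P, Q, hP, hQ, h⟩
    have hXlower : ∀ i j, i < j → X i j = 0 := by
      subst hX; intro i j hij; fin_cases i <;> fin_cases j <;> simp_all
    have hYlower : ∀ i j, i < j → Y i j = 0 := by
      subst hY; intro i j hij; fin_cases i <;> fin_cases j <;> simp_all
    have h22 := congr_fun₂ h 2 2
    rw [Matrix.add_apply, Matrix.mul_apply_self_of_lower_triangular hXlower hP,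
      Matrix.mul_apply_self_of_lower_triangular hYlower hQ, hX, hY] at h22
    simp at h22
  · have hXY : X * 1 + Y * Y.transpose = 1 := by
      subst hX hY
      ext i j
      fin_cases i <;> fin_cases j <;> simp [Matrix.vecMul, dotProduct, Fin.sum_univ_three]
    exact fun M _ hMX hMY => eq_zero_of_mul_eq_zero_of_mul_add_mul_eq_one_s18 hXY hMX hMY
end
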